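/- arXiv:2203.04531 — 2 statements merged into one kernel-verified Lean document; each statement's English description precedes it below -/
import Mathlib

section
/- Let P(x) = p₀ + x and Q(y) = q₀ + y be unit-speed affine maps in the same direction, and let h(x,y) = |P(x)-Q(y)| = |p₀ - q₀ + x - y|. Suppose p₀ - q₀ ≥ 0 (the starting point (x_s, y_s) = (0,0) is on or below the valley). Let γ₁(z) = (0, z) be the vertical path toward the valley, restricted to z with p₀ - q₀ - z ≥ 0, and let γ₂(z) = (α(z), β(z)) be any path with α, β nondecreasing, α(z)+β(z) = z, α(0)=β(0)=0. Then for all such z, h(γ₁(z)) ≤ h(γ₂(z)). -/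
/-- Same-direction cell (`P x = p₀ + x`, `Q y = q₀ + y`) with `p₀ - q₀ ≥ 0`:
the vertical path `γ₁ z = (0, z)` toward the valley (while `p₀ - q₀ - z ≥ 0`)
has pointwise height at most that of any monotone unit-L¹-speed path
`γ₂ z = (α z, β z)` starting at the origin. -/
theorem vertical_path_dominates
    (p₀ q₀ : ℝ) (hc : 0 ≤ p₀ - q₀)
    (α β : ℝ → ℝ) (hα : Monotone α) (hβ : Monotone β)
    (hα0 : α 0 = 0) (hβ0 : β 0 = 0)
    (hsum : ∀ z, α z + β z = z) :
    ∀ z, 0 ≤ z → 0 ≤ p₀ - q₀ - z →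
      |(p₀ + 0) - (q₀ + z)| ≤ |(p₀ + α z) - (q₀ + β z)| := by
  intro z hz hvz
  have hαz : 0 ≤ α z := hα0 ▸ hα hz
  have hβz : β z ≤ z := by have := hsum z; linarith
  have h1 : 0 ≤ p₀ + α z - (q₀ + β z) := by nlinarith
  rw [abs_of_nonneg (by linarith), abs_of_nonneg (by linarith)]
  linarith
end

section
/- Let f : [a,b] → ℝ be continuous and piecewise quadratic such that at every point the left derivative is greater than or equal to the right derivative. If t ∈ (a,b) is a local minimum of f, then f is differentiable at t and f'(t) = 0. -/
/-!
Near an interior point `x`, `f` agrees on `[x, x + ε]` and on `[x - ε, x]` with (possibly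
different) quadratic pieces, so both one-sided derivatives exist. At a local minimum the left
one is `≤ 0` and the right one is `≥ 0`; together with right `≤` left both vanish, and the two
one-sided derivatives glue to `f' x = 0`.
-/

open Set

theorem Fin.exists_castSucc_and_not_succ {n : ℕ} {p : Fin (n + 1) → Prop} (h0 : p 0)
    (hlast : ¬ p (Fin.last n)) : ∃ i : Fin n, p i.castSucc ∧ ¬ p i.succ := by
  by_contra! h
  exact hlast (Fin.induction (motive := fun k => p k) h0 h (Fin.last n))

section OneSided

variable {f g : ℝ → ℝ} {x c d : ℝ}

theorem hasDerivWithinAt_Ici_of_eqOn_Icc (hxc : x < c) (hfg : EqOn f g (Icc x c))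
    (hg : HasDerivAt g d x) : HasDerivWithinAt f d (Ici x) x :=
  hg.hasDerivWithinAt.congr_of_eventuallyEq (hfg.eventuallyEq_of_mem (Icc_mem_nhdsGE hxc))
    (hfg ⟨le_rfl, hxc.le⟩)

theorem hasDerivWithinAt_Iic_of_eqOn_Icc (hcx : c < x) (hfg : EqOn f g (Icc c x))
    (hg : HasDerivAt g d x) : HasDerivWithinAt f d (Iic x) x :=
  hg.hasDerivWithinAt.congr_of_eventuallyEq (hfg.eventuallyEq_of_mem (Icc_mem_nhdsLE hcx))
    (hfg ⟨hcx.le, le_rfl⟩)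

theorem IsLocalMin.hasDerivWithinAt_Ici_nonneg (hmin : IsLocalMin f x)
    (hf : HasDerivWithinAt f d (Ici x) x) : 0 ≤ d := by
  have hone : (1 : ℝ) ∈ posTangentConeAt (Ici x) x := by
    apply mem_posTangentConeAt_of_segment_subset
    rw [segment_eq_Icc (by linarith)]
    exact Icc_subset_Ici_self
  simpa using (hmin.on (Ici x)).hasFDerivWithinAt_nonneg hf.hasFDerivWithinAt hone

theorem IsLocalMin.hasDerivWithinAt_Iic_nonpos (hmin : IsLocalMin f x)
    (hf : HasDerivWithinAt f d (Iic x) x) : d ≤ 0 := by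
  have hneg_one : (-1 : ℝ) ∈ posTangentConeAt (Iic x) x := by
    apply mem_posTangentConeAt_of_segment_subset
    rw [segment_symm, segment_eq_Icc (by linarith)]
    exact Icc_subset_Iic_self
  simpa using (hmin.on (Iic x)).hasFDerivWithinAt_nonneg hf.hasFDerivWithinAt hneg_one

theorem IsLocalMin.hasDerivAt_zero_of_le {dl dr : ℝ} (hmin : IsLocalMin f x)
    (hl : HasDerivWithinAt f dl (Iic x) x) (hr : HasDerivWithinAt f dr (Ici x) x)
    (hle : dr ≤ dl) : HasDerivAt f 0 x := by
  have hdl := hmin.hasDerivWithinAt_Iic_nonpos hl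
  have hdr := hmin.hasDerivWithinAt_Ici_nonneg hr
  obtain rfl : dl = 0 := by linarith
  obtain rfl : dr = 0 := by linarith
  simpa [Iic_union_Ici] using hl.union hr

end OneSided

theorem local_min_has_deriv_zero_general
    (a b : ℝ) (f : ℝ → ℝ) (n : ℕ)
    (t : Fin (n + 1) → ℝ) (A B C : Fin n → ℝ)
    (ht0 : t 0 = a) (htn : t (Fin.last n) = b)
    (hpieces : ∀ i : Fin n, ∀ x ∈ Set.Icc (t i.castSucc) (t i.succ),
      f x = A i * x ^ 2 + B i * x + C i)
    (hderiv : ∀ x ∈ Set.Ioo a b, ∀ dl dr : ℝ,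
      HasDerivWithinAt f dl (Set.Iio x) x →
      HasDerivWithinAt f dr (Set.Ioi x) x → dr ≤ dl)
    (x : ℝ) (hx : x ∈ Set.Ioo a b) (hmin : IsLocalMin f x) :
    HasDerivAt f 0 x := by
  have hquad (i : Fin n) : HasDerivAt (fun y => A i * y ^ 2 + B i * y + C i)
      (deriv (fun y => A i * y ^ 2 + B i * y + C i) x) x := by
    apply DifferentiableAt.hasDerivAt
    fun_prop
  obtain ⟨i, hti, hxti⟩ := Fin.exists_castSucc_and_not_succ (p := fun k => t k ≤ x)
    (by simp [ht0, hx.1.le]) (by simp [htn, hx.2])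
  obtain ⟨j, htj, hxtj⟩ := Fin.exists_castSucc_and_not_succ (p := fun k => t k < x)
    (by simp [ht0, hx.1]) (by simp [htn, hx.2.le])
  have hr := hasDerivWithinAt_Ici_of_eqOn_Icc (not_le.1 hxti)
    (fun y hy => hpieces i y ⟨hti.trans hy.1, hy.2⟩) (hquad i)
  have hl := hasDerivWithinAt_Iic_of_eqOn_Icc htj
    (fun y hy => hpieces j y ⟨hy.1, hy.2.trans (not_lt.1 hxtj)⟩) (hquad j)
  exact hmin.hasDerivAt_zero_of_le hl hr (hderiv x hx _ _ hl.Iio_of_Iic hr.Ioi_of_Ici)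

/-- A continuous piecewise quadratic function whose left derivative dominates
its right derivative everywhere is differentiable with derivative `0` at any
interior local minimum. -/
theorem local_min_has_deriv_zero
    (a b : ℝ) (f : ℝ → ℝ) (n : ℕ)
    (t : Fin (n + 1) → ℝ) (A B C : Fin n → ℝ)
    (ht : Monotone t) (ht0 : t 0 = a) (htn : t (Fin.last n) = b)
    (hpieces : ∀ i : Fin n, ∀ x ∈ Set.Icc (t i.castSucc) (t i.succ),
      f x = A i * x ^ 2 + B i * x + C i)
    (hcont : ContinuousOn f (Set.Icc a b))
    (hderiv : ∀ x ∈ Set.Ioo a b, ∀ dl dr : ℝ,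
      HasDerivWithinAt f dl (Set.Iio x) x →
      HasDerivWithinAt f dr (Set.Ioi x) x → dr ≤ dl)
    (x : ℝ) (hx : x ∈ Set.Ioo a b) (hmin : IsLocalMin f x) :
    HasDerivAt f 0 x :=
  local_min_has_deriv_zero_general a b f n t A B C ht0 htn hpieces hderiv x hx hmin
end
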